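/- Consider the well-balanced finite volume scheme for the variable-stiffness blood flow system on cells i ∈ ℤ with data (A_i, Q_i), stiffnesses k_i > 0, rest areas A₀ᵢ > 0, 𝐀₀ᵢ = k_i√A₀ᵢ, ρ > 0, Δt, Δx > 0. At each interface set k*_{i+1/2} = max(k_i, k_{i+1}), define the hydrostatically reconstructed states √A_{i+1/2,L} = max(k_i√A_i + min(Δ𝐀₀_{i+1/2},0),0)/k*_{i+1/2}, U_{i+1/2,L} = (A_{i+1/2,L}, A_{i+1/2,L}u_i), √A_{i+1/2,R} = max(k_{i+1}√A_{i+1} − max(Δ𝐀₀_{i+1/2},0),0)/k*_{i+1/2}, U_{i+1/2,R} = (A_{i+1/2,R}, A_{i+1/2,R}u_{i+1}), with Δ𝐀₀_{i+1/2} = 𝐀₀_{i+1} − 𝐀₀ᵢ and u_j = Q_j/A_j, compute F_{i+1/2} as the HLL flux of (U_{i+1/2,L}, U_{i+1/2,R}, k*_{i+1/2}), and update U_i^{n+1} = U_i − (Δt/Δx)(F_{i+1/2} + S_{i+1/2,L} − F_{i−1/2} − S_{i−1/2,R}), where S_{i+1/2,L} = (0, 𝐏(A_i,k_i) − 𝐏(A_{i+1/2,L},k*_{i+1/2})),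 S_{i−1/2,R} = (0, 𝐏(A_i,k_i) − 𝐏(A_{i−1/2,R},k*_{i−1/2})) and 𝐏(A,k) = kA^{3/2}/(3ρ√π). Suppose the data are at a rest equilibrium: Q_i = 0 and k_i√A_i − 𝐀₀ᵢ = C for all i, with A_i > 0 and min(𝐀₀ᵢ, 𝐀₀_{i+1}) + C > 0 for all i. Then the scheme is well balanced: U_i^{n+1} = U_i for every i. -/
import Mathlib


open Real

/-- The flux of the 1D blood flow system, `F(U,k*) = (Q, Q²/A + (k*/(3√π ρ))A^{3/2})`
for `U = (A, Q)`. -/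
noncomputable def bloodFlux (ρ kst : ℝ) (U : ℝ × ℝ) : ℝ × ℝ :=
  (U.2, U.2 ^ 2 / U.1 + kst / (3 * Real.sqrt π * ρ) * U.1 ^ (3 / 2 : ℝ))

/-- First eigenvalue `λ₁(U,k*) = Q/A − √(k*√A/(2ρ√π))`. -/
noncomputable def lambda1 (ρ kst : ℝ) (U : ℝ × ℝ) : ℝ :=
  U.2 / U.1 - Real.sqrt (kst * Real.sqrt U.1 / (2 * ρ * Real.sqrt π))

/-- Second eigenvalue `λ₂(U,k*) = Q/A + √(k*√A/(2ρ√π))`. -/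
noncomputable def lambda2 (ρ kst : ℝ) (U : ℝ × ℝ) : ℝ :=
  U.2 / U.1 + Real.sqrt (kst * Real.sqrt U.1 / (2 * ρ * Real.sqrt π))

/-- The lower wave speed `c₁`: the infimum of the eigenvalues over `{U_L, U_R}`. -/
noncomputable def hllC1 (ρ kst : ℝ) (UL UR : ℝ × ℝ) : ℝ :=
  min (min (lambda1 ρ kst UL) (lambda2 ρ kst UL))
      (min (lambda1 ρ kst UR) (lambda2 ρ kst UR))

/-- The upper wave speed `c₂`: the supremum of the eigenvalues over `{U_L, U_R}`. -/
noncomputable def hllC2 (ρ kst : ℝ) (UL UR : ℝ × ℝ) : ℝ :=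
  max (max (lambda1 ρ kst UL) (lambda2 ρ kst UL))
      (max (lambda1 ρ kst UR) (lambda2 ρ kst UR))

/-- The HLL numerical flux. -/
noncomputable def hllFlux (ρ kst : ℝ) (UL UR : ℝ × ℝ) : ℝ × ℝ :=
  let c1 := hllC1 ρ kst UL UR
  let c2 := hllC2 ρ kst UL UR
  if 0 ≤ c1 then bloodFlux ρ kst UL
  else if c2 ≤ 0 then bloodFlux ρ kst UR
  else (c2 / (c2 - c1)) • bloodFlux ρ kst UL - (c1 / (c2 - c1)) • bloodFlux ρ kst UR
    + (c1 * c2 / (c2 - c1)) • (UR - UL)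

lemma hll_self (ρ kst : ℝ) (U : ℝ × ℝ) : hllFlux ρ kst U U = bloodFlux ρ kst U := by
  unfold hllFlux
  set c1 := hllC1 ρ kst U U with hc1
  set c2 := hllC2 ρ kst U U with hc2
  by_cases h1 : 0 ≤ c1
  · simp [h1]
  · by_cases h2 : c2 ≤ 0
    · simp [h1, h2]
    · simp only [h1, h2, if_false]
      have hd : c2 - c1 ≠ 0 := by
        push_neg at h1 h2; intro h; nlinarith
      rw [sub_self, smul_zero, add_zero, ← sub_smul, div_sub_div_same, div_self hd, one_smul]

/-- The well-balanced finite volume scheme with hydrostatic reconstruction and HLL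
flux exactly preserves the rest equilibria `Q = 0`, `k√A − k√A₀ = C` of the
variable-stiffness blood flow system. -/
theorem hydrostatic_scheme_well_balanced
    (ρ Δt Δx : ℝ) (hρ : 0 < ρ) (hΔt : 0 < Δt) (hΔx : 0 < Δx)
    (A Q k A0 : ℤ → ℝ)
    (hk : ∀ i, 0 < k i) (hA0 : ∀ i, 0 < A0 i) (hA : ∀ i, 0 < A i)
    (AA0 : ℤ → ℝ) (hAA0 : ∀ i, AA0 i = k i * Real.sqrt (A0 i))
    (kstar : ℤ → ℝ) (hkstar : ∀ i, kstar i = max (k i) (k (i + 1)))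
    (AL AR : ℤ → ℝ)
    (hAL : ∀ i, Real.sqrt (AL i)
      = max (k i * Real.sqrt (A i) + min (AA0 (i + 1) - AA0 i) 0) 0 / kstar i)
    (hALnn : ∀ i, 0 ≤ AL i)
    (hAR : ∀ i, Real.sqrt (AR i)
      = max (k (i + 1) * Real.sqrt (A (i + 1)) - max (AA0 (i + 1) - AA0 i) 0) 0 / kstar i)
    (hARnn : ∀ i, 0 ≤ AR i)
    (UL UR : ℤ → ℝ × ℝ)
    (hUL : ∀ i, UL i = (AL i, AL i * (Q i / A i)))
    (hUR : ∀ i, UR i = (AR i, AR i * (Q (i + 1) / A (i + 1))))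
    (Fh : ℤ → ℝ × ℝ) (hFh : ∀ i, Fh i = hllFlux ρ (kstar i) (UL i) (UR i))
    (P : ℝ → ℝ → ℝ)
    (hP : ∀ a kk, P a kk = kk * a ^ (3 / 2 : ℝ) / (3 * ρ * Real.sqrt π))
    (SL SR : ℤ → ℝ × ℝ)
    (hSL : ∀ i, SL i = (0, P (A i) (k i) - P (AL i) (kstar i)))
    (hSR : ∀ i, SR i = (0, P (A i) (k i) - P (AR (i - 1)) (kstar (i - 1))))
    (Unew : ℤ → ℝ × ℝ)
    (hUnew : ∀ i, Unew i
      = (A i, Q i) - (Δt / Δx) • (Fh i + SL i - (Fh (i - 1) + SR i)))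
    (C : ℝ)
    (hQ : ∀ i, Q i = 0)
    (heq : ∀ i, k i * Real.sqrt (A i) - AA0 i = C)
    (hposm : ∀ i, 0 < min (AA0 i) (AA0 (i + 1)) + C) :
    ∀ i, Unew i = (A i, Q i) := by
  intro i
  -- equality of reconstructed sqrt values
  have hsq : ∀ j, Real.sqrt (AL j) = Real.sqrt (AR j) := by
    intro j
    have e1 : k j * Real.sqrt (A j) = AA0 j + C := by have := heq j; linarith
    have e2 : k (j+1) * Real.sqrt (A (j+1)) = AA0 (j+1) + C := by have := heq (j+1); linarith
    have hpos := hposm j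
    rw [hAL j, hAR j, e1, e2]
    rcases le_total (AA0 j) (AA0 (j+1)) with h | h
    · have hd0 : (0:ℝ) ≤ AA0 (j+1) - AA0 j := by linarith
      rw [min_eq_left h] at hpos
      rw [min_eq_right hd0, max_eq_left hd0, add_zero]
      have h2' : AA0 (j+1) + C - (AA0 (j+1) - AA0 j) = AA0 j + C := by ring
      rw [h2']
    · have hd0 : AA0 (j+1) - AA0 j ≤ (0:ℝ) := by linarith
      rw [min_eq_left hd0, max_eq_right hd0, sub_zero]
      have h1' : AA0 j + C + (AA0 (j+1) - AA0 j) = AA0 (j+1) + C := by ring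
      rw [h1']
  have hALR : ∀ j, AL j = AR j := by
    intro j
    have := hsq j
    calc AL j = Real.sqrt (AL j) ^ 2 := (Real.sq_sqrt (hALnn j)).symm
    _ = Real.sqrt (AR j) ^ 2 := by rw [this]
    _ = AR j := Real.sq_sqrt (hARnn j)
  have hFhval : ∀ j, Fh j = (0, kstar j * AL j ^ (3 / 2 : ℝ) / (3 * ρ * Real.sqrt π)) := by
    intro j
    have hULj : UL j = (AL j, 0) := by rw [hUL j, hQ j]; simp
    have hURj : UR j = (AL j, 0) := by rw [hUR j, hQ (j+1), ← hALR j]; simp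
    rw [hFh j, hULj, hURj, hll_self]
    unfold bloodFlux
    simp only []
    refine Prod.ext rfl ?_
    simp only []
    rw [zero_pow (by norm_num), zero_div, zero_add]
    ring
  have hzero : Fh i + SL i - (Fh (i-1) + SR i) = 0 := by
    rw [hFhval i, hFhval (i-1), hSL i, hSR i, ← hALR (i-1), hP (AL i) (kstar i),
      hP (AL (i-1)) (kstar (i-1))]
    rw [Prod.ext_iff]
    refine ⟨by simp, ?_⟩
    simp only [Prod.snd_add, Prod.snd_sub, Prod.snd_zero]
    ring
  rw [hUnew i, hzero, smul_zero, sub_zero]
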